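/- Let A : [0,1) → (0,1/2) be decreasing with A(r) → 0 as r → 1⁻. Then there exists a 2π-periodic function f ∈ L¹([−π,π]) (in particular Henstock–Kurzweil integrable) such that, with u_r(θ) = P[f](re^{iθ}), one has ‖u_r − f‖ ≥ A(r) for all 0 ≤ r < 1; that is, the convergence ‖u_r − f‖ → 0 can be arbitrarily slow. -/

import Mathlib

open Real Filter MeasureTheory Set Topology

noncomputable section

/-- The Poisson kernel for the unit disc. -/
def discPoissonKernel (r θ : ℝ) : ℝ :=
  (1 - r ^ 2) / (2 * π * (1 - 2 * r * Real.cos θ + r ^ 2))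

/-- The Poisson integral of an integrable `f`, evaluated at the point `r e^{iθ}`. -/
def poissonIntegral (f : ℝ → ℝ) (r θ : ℝ) : ℝ :=
  ∫ φ in (-π)..π, f φ * discPoissonKernel r (φ - θ)

/-- The Alexiewicz norm over the circle: the supremum of `|∫_I g|` over intervals `I`
of length at most `2π`. -/
def alexNorm (g : ℝ → ℝ) : ℝ :=
  sSup {v | ∃ a b : ℝ, a ≤ b ∧ b - a ≤ 2 * π ∧ v = |∫ x in a..b, g x|}

/-- The `L^p` norm on `[-π,π]`. -/
def lpNorm (p : ℝ) (g : ℝ → ℝ) : ℝ :=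
  (∫ θ in (-π)..π, |g θ| ^ p) ^ (1 / p)

/-!
Since `A → 0` at `1⁻`, there are radii `ρₖ < 1` such that every `r ∈ [0, 1)` lies below some
`ρₖ` with `A r ≤ 2⁻ᵏ`. Put on each period disjoint spikes, the `k`-th of mass `2 · 2⁻ᵏ` and
width at most `(1 - ρₖ) 2⁻ᵏ / 4`. The Poisson kernel at radius `r` is at most `1 / (π (1 - r))`,
so for `r < ρₖ` the Poisson integral `u_r` of `f` (total mass `4`) has integral at most `2⁻ᵏ`
over the `k`-th spike, where `f` has integral `2 · 2⁻ᵏ`; hence `‖u_r - f‖ ≥ 2⁻ᵏ`.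
-/

open Function

section PoissonIntegral

variable {f : ℝ → ℝ} {r : ℝ}

lemma sq_one_sub_le_discPoissonKernel_denom (hr : 0 ≤ r) (θ : ℝ) :
    (1 - r) ^ 2 ≤ 1 - 2 * r * Real.cos θ + r ^ 2 := by
  nlinarith [Real.cos_le_one θ]

lemma discPoissonKernel_nonneg (hr0 : 0 ≤ r) (hr1 : r < 1) (θ : ℝ) :
    0 ≤ discPoissonKernel r θ := by
  have := sq_one_sub_le_discPoissonKernel_denom hr0 θ
  unfold discPoissonKernel
  apply div_nonneg <;> nlinarith [pi_pos]

lemma discPoissonKernel_le (hr0 : 0 ≤ r) (hr1 : r < 1) (θ : ℝ) :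
    discPoissonKernel r θ ≤ 1 / (π * (1 - r)) := by
  have hden := sq_one_sub_le_discPoissonKernel_denom hr0 θ
  have h1r : 0 < 1 - r := by linarith
  calc discPoissonKernel r θ ≤ (1 - r ^ 2) / (2 * π * (1 - r) ^ 2) := by
        unfold discPoissonKernel
        gcongr
        nlinarith
    _ = (1 + r) / (2 * π * (1 - r)) := by field_simp; ring
    _ ≤ 2 / (2 * π * (1 - r)) := by gcongr; linarith
    _ = 1 / (π * (1 - r)) := by field_simp

lemma continuous_discPoissonKernel (hr0 : 0 ≤ r) (hr1 : r < 1) :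
    Continuous (discPoissonKernel r) := by
  refine continuous_const.div (by fun_prop) fun θ => ?_
  have := sq_one_sub_le_discPoissonKernel_denom hr0 θ
  have : 0 < (1 - r) ^ 2 := by nlinarith
  exact mul_ne_zero (by positivity) (by linarith)

lemma abs_mul_discPoissonKernel_le (hr0 : 0 ≤ r) (hr1 : r < 1) (x θ : ℝ) :
    |x * discPoissonKernel r θ| ≤ |x| / (π * (1 - r)) := by
  rw [abs_mul, abs_of_nonneg (discPoissonKernel_nonneg hr0 hr1 θ), div_eq_mul_one_div]
  exact mul_le_mul_of_nonneg_left (discPoissonKernel_le hr0 hr1 θ) (abs_nonneg x)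

lemma abs_poissonIntegral_le (hf : IntervalIntegrable f volume (-π) π) (hr0 : 0 ≤ r)
    (hr1 : r < 1) (θ : ℝ) :
    |poissonIntegral f r θ| ≤ (∫ φ in (-π)..π, |f φ|) / (π * (1 - r)) := by
  rw [poissonIntegral, ← intervalIntegral.integral_div, ← Real.norm_eq_abs]
  exact intervalIntegral.norm_integral_le_of_norm_le (by linarith [pi_pos])
    (.of_forall fun φ _ => abs_mul_discPoissonKernel_le hr0 hr1 (f φ) (φ - θ))
    (hf.abs.div_const _)

lemma continuous_poissonIntegral (hf : IntervalIntegrable f volume (-π) π) (hr0 : 0 ≤ r)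
    (hr1 : r < 1) : Continuous (poissonIntegral f r) := by
  have hP := continuous_discPoissonKernel hr0 hr1
  show Continuous fun θ => ∫ φ in (-π)..π, f φ * discPoissonKernel r (φ - θ)
  exact intervalIntegral.continuous_of_dominated_interval
    (F := fun θ φ => f φ * discPoissonKernel r (φ - θ)) (fun θ => hf.def'.aestronglyMeasurable.mul
      (hP.comp (continuous_id.sub continuous_const)).aestronglyMeasurable)
    (fun θ => .of_forall fun φ _ => abs_mul_discPoissonKernel_le hr0 hr1 _ _)
    (hf.abs.div_const _)
    (.of_forall fun φ _ => continuous_const.mul (hP.comp (continuous_const.sub continuous_id)))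

end PoissonIntegral

lemma abs_integral_le_alexNorm {g h : ℝ → ℝ} (hh : Periodic h (2 * π))
    (hhi : IntervalIntegrable h volume 0 (2 * π)) (hgh : ∀ x, |g x| ≤ h x) {a b : ℝ}
    (hab : a ≤ b) (hba : b - a ≤ 2 * π) : |∫ x in a..b, g x| ≤ alexNorm g := by
  have hloc := hh.intervalIntegrable two_pi_pos.ne' (t := 0) (by simpa using hhi)
  have hbound : ∀ a b, a ≤ b → b - a ≤ 2 * π → |∫ x in a..b, g x| ≤ ∫ x in 0..2 * π, h x := by
    intro a b hab hba
    calc |∫ x in a..b, g x| ≤ ∫ x in a..b, h x :=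
          intervalIntegral.norm_integral_le_of_norm_le (f := g) hab (.of_forall fun x _ => hgh x)
            (hloc a b)
      _ ≤ ∫ x in a..a + 2 * π, h x :=
          intervalIntegral.integral_mono_interval le_rfl hab (by linarith)
            (.of_forall fun x => (abs_nonneg _).trans (hgh x)) (hloc _ _)
      _ = ∫ x in 0..2 * π, h x := by simpa using hh.intervalIntegral_add_eq a 0
  refine le_csSup ⟨∫ x in 0..2 * π, h x, ?_⟩ ⟨a, b, hab, hba, rfl⟩
  rintro _ ⟨a, b, hab, hba, rfl⟩
  exact hbound a b hab hba

lemma le_alexNorm_poissonIntegral_sub {f : ℝ → ℝ} {r a b c : ℝ} (hf : Periodic f (2 * π))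
    (hfi : IntervalIntegrable f volume (-π) π) (hr0 : 0 ≤ r) (hr1 : r < 1)
    (hab : a ≤ b) (hba : b - a ≤ 2 * π) (hmass : 2 * c ≤ ∫ θ in a..b, f θ)
    (hshort : (b - a) * ((∫ φ in (-π)..π, |f φ|) / (π * (1 - r))) ≤ c) :
    c ≤ alexNorm (fun θ => poissonIntegral f r θ - f θ) := by
  set C := (∫ φ in (-π)..π, |f φ|) / (π * (1 - r))
  have hu := abs_poissonIntegral_le hfi hr0 hr1
  have hfloc := hf.intervalIntegrable two_pi_pos.ne' (t := -π)
    (by rwa [show -π + 2 * π = π by ring])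
  have hu_int : ∫ θ in a..b, poissonIntegral f r θ ≤ (b - a) * C := by
    have := intervalIntegral.norm_integral_le_of_norm_le_const
      (a := a) (b := b) (f := poissonIntegral f r) fun θ _ => hu θ
    rw [abs_of_nonneg (sub_nonneg.2 hab), mul_comm] at this
    exact (le_abs_self _).trans this
  refine le_trans ?_ (abs_integral_le_alexNorm (h := fun θ => C + |f θ|)
    (fun θ => by simp only [hf θ]) (intervalIntegrable_const.add (hfloc 0 (2 * π)).abs)
    (fun θ => (abs_sub _ _).trans (add_le_add_left (hu θ) _)) hab hba)
  rw [intervalIntegral.integral_sub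
    ((continuous_poissonIntegral hfi hr0 hr1).intervalIntegrable _ _) (hfloc a b), abs_sub_comm]
  exact le_abs.2 (Or.inl (by linarith))

lemma exists_radii_of_tendsto_zero {A : ℝ → ℝ} (hA : ∀ r ∈ Ico (0 : ℝ) 1, A r ∈ Ioc 0 1)
    (hlim : Tendsto A (𝓝[<] 1) (𝓝 0)) :
    ∃ ρ : ℕ → ℝ, (∀ k, ρ k < 1) ∧ ∀ r ∈ Ico (0 : ℝ) 1, ∃ k, r < ρ k ∧ A r ≤ (1 / 2) ^ k := by
  have hev (k : ℕ) : ∀ᶠ r in 𝓝[<] (1 : ℝ), A r ≤ (1 / 2) ^ (k + 1) :=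
    hlim.eventually (ge_mem_nhds (by positivity))
  choose ρ hρ1 hρ using fun k => mem_nhdsLT_iff_exists_Ico_subset.1 (hev k)
  refine ⟨ρ, hρ1, fun r hr => ?_⟩
  obtain ⟨k, hk, hAk⟩ := exists_nat_pow_near_of_lt_one (hA r hr).1 (hA r hr).2
    (by norm_num) (by norm_num : (1 / 2 : ℝ) < 1)
  refine ⟨k, ?_, hAk⟩
  by_contra! h
  exact (hρ k ⟨h, hr.2⟩).not_gt hk

lemma tsum_indicator_apply_of_mem {ι α M : Type*} [AddCommMonoid M] [TopologicalSpace M]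
    {s : ι → Set α} (hs : Pairwise (Disjoint on s)) (f : ι → α → M) {i : ι} {x : α}
    (hx : x ∈ s i) : ∑' j, (s j).indicator (f j) x = f i x := by
  rw [tsum_eq_single i fun j hj => indicator_of_notMem ((hs hj).notMem_of_mem_right hx) _,
    indicator_of_mem hx]

namespace SlowPoisson

variable (ρ : ℕ → ℝ)

def width (k : ℕ) : ℝ := min ((1 / 3) ^ (k + 1)) ((1 - ρ k) * (1 / 2) ^ k / 4)

def spike (k : ℕ) : Set ℝ := Ioc ((1 / 3) ^ (k + 1)) ((1 / 3) ^ (k + 1) + width ρ k)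

def height (k : ℕ) : ℝ := 2 * (1 / 2) ^ k / width ρ k

def spikes (θ : ℝ) : ℝ := ∑' k, (spike ρ k).indicator (fun _ => height ρ k) θ

def slowFun : ℝ → ℝ := spikes ρ ∘ toIocMod two_pi_pos (-π)

lemma width_le (k : ℕ) : width ρ k ≤ (1 / 3) ^ (k + 1) := min_le_left _ _

lemma measurableSet_spike (k : ℕ) : MeasurableSet (spike ρ k) := measurableSet_Ioc

lemma spike_subset (k : ℕ) : spike ρ k ⊆ Ioc ((1 / 3) ^ (k + 1)) ((1 / 3) ^ k) := by
  refine Ioc_subset_Ioc_right ?_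
  have := width_le ρ k
  rw [pow_succ] at *
  nlinarith [pow_pos (by norm_num : (0 : ℝ) < 1 / 3) k]

lemma pairwise_disjoint_spike : Pairwise (Disjoint on spike ρ) :=
  ((pow_right_anti₀ (by norm_num) (by norm_num : (1 / 3 : ℝ) ≤ 1)).pairwise_disjoint_on_Ioc_succ
    ).mono fun _ _ h => h.mono (spike_subset ρ _) (spike_subset ρ _)

lemma spike_subset_Ioc_neg_pi_pi (k : ℕ) : spike ρ k ⊆ Ioc (-π) π := by
  refine (spike_subset ρ k).trans (Ioc_subset_Ioc ?_ ?_)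
  · linarith [pi_pos, pow_pos (by norm_num : (0 : ℝ) < 1 / 3) (k + 1)]
  · linarith [pi_gt_three, pow_le_one₀ (by norm_num : (0 : ℝ) ≤ 1 / 3) (by norm_num) (n := k)]

lemma spikes_of_mem {k : ℕ} {θ : ℝ} (hθ : θ ∈ spike ρ k) : spikes ρ θ = height ρ k :=
  tsum_indicator_apply_of_mem (pairwise_disjoint_spike ρ) _ hθ

lemma spikes_of_notMem_iUnion {θ : ℝ} (hθ : θ ∉ ⋃ k, spike ρ k) : spikes ρ θ = 0 := by
  simp only [mem_iUnion, not_exists] at hθ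
  simp [spikes, indicator_of_notMem (hθ _)]

lemma spikes_of_notMem_Ioc {θ : ℝ} (hθ : θ ∉ Ioc (-π) π) : spikes ρ θ = 0 :=
  spikes_of_notMem_iUnion ρ fun h => hθ (iUnion_subset (spike_subset_Ioc_neg_pi_pi ρ) h)

lemma periodic_slowFun : Periodic (slowFun ρ) (2 * π) := fun θ => by
  simp only [slowFun, comp_apply, toIocMod_add_right]

lemma slowFun_eqOn : EqOn (slowFun ρ) (spikes ρ) (Ioc (-π) π) := fun θ hθ => by
  rw [slowFun, comp_apply, (toIocMod_eq_self two_pi_pos).2 (by rwa [show -π + 2 * π = π by ring])]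

lemma integrableOn_spikes_spike (k : ℕ) : IntegrableOn (spikes ρ) (spike ρ k) :=
  (integrableOn_congr_fun (fun _ hθ => spikes_of_mem ρ hθ) (measurableSet_spike ρ k)).2
    (integrableOn_const (by simp [spike]))

variable {ρ} (hρ : ∀ k, ρ k < 1)
include hρ

lemma width_pos (k : ℕ) : 0 < width ρ k :=
  lt_min (by positivity) (div_pos (mul_pos (sub_pos.2 (hρ k)) (by positivity)) (by norm_num))

lemma spikes_nonneg (θ : ℝ) : 0 ≤ spikes ρ θ :=
  tsum_nonneg fun k =>
    indicator_nonneg (fun _ _ => div_nonneg (by positivity) (width_pos hρ k).le) _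

lemma setIntegral_spikes_spike (k : ℕ) : ∫ θ in spike ρ k, spikes ρ θ = 2 * (1 / 2) ^ k := by
  have hw := width_pos hρ k
  rw [setIntegral_congr_fun (measurableSet_spike ρ k) fun θ hθ => spikes_of_mem ρ hθ,
    setIntegral_const, spike, Real.volume_real_Ioc_of_le (by linarith), add_sub_cancel_left,
    smul_eq_mul, height, mul_div_cancel₀ _ hw.ne']

lemma integrable_spikes : Integrable (spikes ρ) := by
  have hnorm (θ : ℝ) : ‖spikes ρ θ‖ = spikes ρ θ := Real.norm_of_nonneg (spikes_nonneg hρ θ)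
  refine (integrableOn_iUnion_of_summable_integral_norm (integrableOn_spikes_spike ρ) ?_
    ).integrable_of_forall_notMem_eq_zero fun θ => spikes_of_notMem_iUnion ρ
  simp_rw [hnorm, setIntegral_spikes_spike hρ]
  exact summable_geometric_two.mul_left 2

lemma integral_spikes : ∫ θ, spikes ρ θ = 4 := by
  rw [← setIntegral_eq_integral_of_forall_compl_eq_zero fun θ => spikes_of_notMem_iUnion ρ,
    integral_iUnion (measurableSet_spike ρ) (pairwise_disjoint_spike ρ)
      (integrable_spikes hρ).integrableOn]
  simp_rw [setIntegral_spikes_spike hρ]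
  rw [tsum_mul_left, tsum_geometric_two]
  norm_num

lemma intervalIntegrable_slowFun : IntervalIntegrable (slowFun ρ) volume (-π) π :=
  (intervalIntegrable_iff_integrableOn_Ioc_of_le (by linarith [pi_pos])).2
    ((integrable_spikes hρ).integrableOn.congr_fun (slowFun_eqOn ρ).symm measurableSet_Ioc)

lemma integral_abs_slowFun : ∫ θ in (-π)..π, |slowFun ρ θ| = 4 := by
  rw [intervalIntegral.integral_of_le (by linarith [pi_pos]),
    setIntegral_congr_fun measurableSet_Ioc fun θ hθ => by
      rw [slowFun_eqOn ρ hθ, abs_of_nonneg (spikes_nonneg hρ θ)],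
    setIntegral_eq_integral_of_forall_compl_eq_zero fun θ => spikes_of_notMem_Ioc ρ,
    integral_spikes hρ]

lemma integral_slowFun_spike (k : ℕ) :
    ∫ θ in (1 / 3) ^ (k + 1)..(1 / 3) ^ (k + 1) + width ρ k, slowFun ρ θ = 2 * (1 / 2) ^ k := by
  rw [intervalIntegral.integral_of_le (by linarith [width_pos hρ k]),
    ← setIntegral_spikes_spike hρ k]
  exact setIntegral_congr_fun (measurableSet_spike ρ k) fun θ hθ =>
    slowFun_eqOn ρ (spike_subset_Ioc_neg_pi_pi ρ k hθ)

lemma width_mul_le {r : ℝ} {k : ℕ} (hrk : r < ρ k) :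
    width ρ k * (4 / (π * (1 - r))) ≤ (1 / 2) ^ k := by
  have h1r : 0 < 1 - r := by linarith [hρ k]
  calc width ρ k * (4 / (π * (1 - r)))
      ≤ (1 - ρ k) * (1 / 2) ^ k / 4 * (4 / (π * (1 - r))) := by
        gcongr
        exact min_le_right _ _
    _ = (1 / 2) ^ k * ((1 - ρ k) / (π * (1 - r))) := by field_simp
    _ ≤ (1 / 2) ^ k := by
        refine mul_le_of_le_one_right (by positivity) ((div_le_one (by positivity)).2 ?_)
        nlinarith [pi_gt_three]

lemma le_alexNorm_slowFun {r : ℝ} {k : ℕ} (hr0 : 0 ≤ r) (hrk : r < ρ k) :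
    (1 / 2) ^ k ≤ alexNorm (fun θ => poissonIntegral (slowFun ρ) r θ - slowFun ρ θ) := by
  refine le_alexNorm_poissonIntegral_sub (periodic_slowFun ρ) (intervalIntegrable_slowFun hρ) hr0
    (hrk.trans (hρ k)) (le_add_of_nonneg_right (width_pos hρ k).le) ?_
    (integral_slowFun_spike hρ k).ge ?_
  · rw [add_sub_cancel_left]
    linarith [pi_gt_three, width_le ρ k,
      pow_le_one₀ (by norm_num : (0 : ℝ) ≤ 1 / 3) (by norm_num) (n := k + 1)]
  · rw [add_sub_cancel_left, integral_abs_slowFun hρ]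
    exact width_mul_le hρ hrk

end SlowPoisson

theorem alex_convergence_arbitrarily_slow_general (A : ℝ → ℝ)
    (hA : ∀ r ∈ Set.Ico (0 : ℝ) 1, A r ∈ Set.Ioo (0 : ℝ) (1 / 2))
    (hlim : Tendsto A (𝓝[<] 1) (𝓝 0)) :
    ∃ f : ℝ → ℝ, Function.Periodic f (2 * π) ∧ IntegrableOn f (Set.Icc (-π) π) ∧
      ∀ r ∈ Set.Ico (0 : ℝ) 1,
        A r ≤ alexNorm (fun θ => poissonIntegral f r θ - f θ) := by
  obtain ⟨ρ, hρ_lt_one, hρ⟩ := exists_radii_of_tendsto_zero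
    (fun r hr => Ioc_subset_Ioc_right (by norm_num) (Ioo_subset_Ioc_self (hA r hr))) hlim
  refine ⟨SlowPoisson.slowFun ρ, SlowPoisson.periodic_slowFun ρ, ?_, fun r hr => ?_⟩
  · exact (intervalIntegrable_iff_integrableOn_Icc_of_le (by linarith [pi_pos])).1
      (SlowPoisson.intervalIntegrable_slowFun hρ_lt_one)
  · obtain ⟨k, hrk, hAk⟩ := hρ r hr
    exact hAk.trans (SlowPoisson.le_alexNorm_slowFun hρ_lt_one hr.1 hrk)

/-- the Alexiewicz-norm convergence `‖u_r - f‖ → 0` can be arbitrarily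
slow: given decreasing `A : [0,1) → (0,1/2)` with `A(r) → 0` as `r → 1⁻`, there is a
2π-periodic `f ∈ L¹[-π,π]` with `‖u_r - f‖ ≥ A(r)` for all `0 ≤ r < 1`. -/
theorem alex_convergence_arbitrarily_slow (A : ℝ → ℝ)
    (hA : ∀ r ∈ Set.Ico (0 : ℝ) 1, A r ∈ Set.Ioo (0 : ℝ) (1 / 2))
    (hmono : AntitoneOn A (Set.Ico 0 1))
    (hlim : Tendsto A (𝓝[<] 1) (𝓝 0)) :
    ∃ f : ℝ → ℝ, Function.Periodic f (2 * π) ∧ IntegrableOn f (Set.Icc (-π) π) ∧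
      ∀ r ∈ Set.Ico (0 : ℝ) 1,
        A r ≤ alexNorm (fun θ => poissonIntegral f r θ - f θ) :=
  alex_convergence_arbitrarily_slow_general A hA hlim
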